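/- There exist C > 0 and h₀ > 0 such that for every h ∈ (0,h₀), every E₀ ∈ ℝ with |E₀ − (1+h)| ≤ e^{−1/(10h)}, and every v ∈ C²([3.5, R+1];ℂ) with −h²v'' + (V−E₀)v = 0 on [3.5,R+1], the vector 𝐯(x) = (W(v,v₊)(x), W(v,v₋)(x)) ∈ ℂ² satisfies |𝐯(x) − 𝐯(3.5)| ≤ C h |𝐯(3.5)| for all x ∈ [3.5, R+1]. -/

import Mathlib

open MeasureTheory Set Real

noncomputable section

/-- The phase `Φ(x) = ∫_{4-E₀}^x √(E₀ - V(y)) dy`. -/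
def wkbPhase (V : ℝ → ℝ) (E₀ : ℝ) (x : ℝ) : ℝ :=
  ∫ y in (4 - E₀)..x, Real.sqrt (E₀ - V y)

/-- The WKB solution `v₊(x) = (E₀ - V(x))^{-1/4} e^{iΦ(x)/h}`. -/
def wkbPlus (V : ℝ → ℝ) (h E₀ : ℝ) (x : ℝ) : ℂ :=
  (((E₀ - V x) ^ (-(1 / 4 : ℝ)) : ℝ) : ℂ) * Complex.exp (Complex.I * (wkbPhase V E₀ x) / h)

/-- The WKB solution `v₋(x) = (E₀ - V(x))^{-1/4} e^{-iΦ(x)/h}`. -/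
def wkbMinus (V : ℝ → ℝ) (h E₀ : ℝ) (x : ℝ) : ℂ :=
  (((E₀ - V x) ^ (-(1 / 4 : ℝ)) : ℝ) : ℂ) * Complex.exp (-Complex.I * (wkbPhase V E₀ x) / h)

/-- The semiclassical Wronskian `W(v, v₊)(x)` of a function `v` (with derivative `v'`)
against the WKB solution `v₊`. -/
def wrPlus (V : ℝ → ℝ) (h E₀ : ℝ) (v v' : ℝ → ℂ) (x : ℝ) : ℂ :=
  v x * ((h : ℂ) * deriv (wkbPlus V h E₀) x) - wkbPlus V h E₀ x * ((h : ℂ) * v' x)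

/-- The semiclassical Wronskian `W(v, v₋)(x)` of a function `v` (with derivative `v'`)
against the WKB solution `v₋`. -/
def wrMinus (V : ℝ → ℝ) (h E₀ : ℝ) (v v' : ℝ → ℂ) (x : ℝ) : ℂ :=
  v x * ((h : ℂ) * deriv (wkbMinus V h E₀) x) - wkbMinus V h E₀ x * ((h : ℂ) * v' x)


/-!
With `p = E₀ - V`, which is bounded below by some `δ > 0` on `[3.5, R + 1]` because `V < 1` there
and `E₀ ≥ 1 - 9h`, the WKB functions `v± = a e^{±iΦ/h}`, `a = p^{-1/4}`, solve the equation up to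
an `O(h²)` error: the amplitude satisfies the transport equation `(√p a)' = -√p a'`, so
`h² v±'' = -p v± + h² a'' e^{±iΦ/h}`. Hence `W(v, v±)' = h a'' e^{±iΦ/h} v`. Since
`W(v₋, v₊) = 2i`, the solution `v` is bounded by `a` times the Wronskian vector `𝐯`, so
`‖𝐯'‖ ≤ K h ‖𝐯‖` with `K` uniform in `E₀`, and Grönwall's inequality gives
`‖𝐯(x) - 𝐯(3.5)‖ ≤ (e^{K h (x - 3.5)} - 1) ‖𝐯(3.5)‖ = O(h) ‖𝐯(3.5)‖`.
-/

open Filter Topology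
open scoped Complex

theorem Real.exp_sub_one_le_mul_exp (s : ℝ) : Real.exp s - 1 ≤ s * Real.exp s := by
  have h := mul_le_mul_of_nonneg_right (Real.one_sub_le_exp_neg s) (Real.exp_pos s).le
  rw [← Real.exp_add, neg_add_cancel, Real.exp_zero] at h
  linarith

theorem Real.exp_neg_one_div_le {t : ℝ} (ht : 0 < t) : Real.exp (-1 / t) ≤ t := by
  rw [neg_div, one_div, Real.exp_neg]
  exact inv_le_of_inv_le₀ ht (by linarith [Real.add_one_le_exp t⁻¹])

theorem Real.sqrt_mul_rpow {y : ℝ} (hy : 0 < y) (r : ℝ) : √y * y ^ r = y ^ (r + 1 / 2) := by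
  rw [Real.sqrt_eq_rpow, ← Real.rpow_add hy, add_comm]

theorem norm_cexp_mul_div {c : ℂ} (hc : c.re = 0) (a b : ℝ) : ‖cexp (c * a / b)‖ = 1 := by
  simp [Complex.norm_exp, Complex.div_ofReal_re, hc]

theorem HasDerivAt.mul_cexp_mul_div {A : ℝ → ℂ} {A' : ℂ} {Φ : ℝ → ℝ} {φ x : ℝ} (c : ℂ) (h : ℝ)
    (hA : HasDerivAt A A' x) (hΦ : HasDerivAt Φ φ x) :
    HasDerivAt (fun y => A y * cexp (c * Φ y / h))
      ((A' + c * φ / h * A x) * cexp (c * Φ x / h)) x := by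
  refine (hA.mul ((hΦ.ofReal_comp.const_mul c).div_const (h : ℂ)).cexp).congr_deriv ?_
  ring

theorem norm_sub_le_of_norm_deriv_le_mul {E : Type*} [NormedAddCommGroup E] [NormedSpace ℝ E]
    {g g' : ℝ → E} {K a b : ℝ} (hK : 0 < K) (hg : ∀ t ∈ Icc a b, HasDerivAt g (g' t) t)
    (bound : ∀ t ∈ Icc a b, ‖g' t‖ ≤ K * ‖g t‖) :
    ∀ x ∈ Icc a b, ‖g x - g a‖ ≤ K * (x - a) * Real.exp (K * (x - a)) * ‖g a‖ := by
  intro x hx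
  have hgr := norm_le_gronwallBound_of_norm_deriv_right_le (f := fun t => g t - g a)
    (K := K) (ε := K * ‖g a‖)
    (HasDerivAt.continuousOn fun t ht => (hg t ht).sub_const (g a))
    (fun t ht => ((hg t (Ico_subset_Icc_self ht)).sub_const (g a)).hasDerivWithinAt)
    (by simp : ‖g a - g a‖ ≤ 0)
    (fun t ht => (bound t (Ico_subset_Icc_self ht)).trans <| by
      have := norm_le_norm_sub_add (g t) (g a); nlinarith) x hx
  rw [gronwallBound_of_K_ne_0 hK.ne'] at hgr
  calc ‖g x - g a‖ ≤ (Real.exp (K * (x - a)) - 1) * ‖g a‖ := by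
        refine hgr.trans_eq ?_; field_simp; ring
    _ ≤ _ := by gcongr; exact Real.exp_sub_one_le_mul_exp _

namespace WKB

section Ansatz

variable {p p' p'' Φ : ℝ → ℝ} {c : ℂ} {h x : ℝ}

/-- For `c = ±i`, `p = E₀ - V` and `Φ' = √p` these are the WKB solutions `v±`. -/
def ansatz (p Φ : ℝ → ℝ) (c : ℂ) (h y : ℝ) : ℂ :=
  ((p y ^ (-(1 / 4 : ℝ)) : ℝ) : ℂ) * cexp (c * Φ y / h)

def amplitudeDeriv (p p' : ℝ → ℝ) (y : ℝ) : ℝ :=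
  -(1 / 4) * p' y * p y ^ (-(5 / 4 : ℝ))

def amplitudeDeriv2 (p p' p'' : ℝ → ℝ) (y : ℝ) : ℝ :=
  -(1 / 4) * p'' y * p y ^ (-(5 / 4 : ℝ)) + 5 / 16 * p' y ^ 2 * p y ^ (-(9 / 4 : ℝ))

def ansatzDeriv (p p' Φ : ℝ → ℝ) (c : ℂ) (h y : ℝ) : ℂ :=
  (amplitudeDeriv p p' y + c / h * ((p y ^ (1 / 4 : ℝ) : ℝ) : ℂ)) * cexp (c * Φ y / h)

theorem hasDerivAt_amplitude (hp : HasDerivAt p (p' x) x) (hpos : 0 < p x) :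
    HasDerivAt (fun y => p y ^ (-(1 / 4 : ℝ))) (amplitudeDeriv p p' x) x := by
  refine (hp.rpow_const (p := -(1 / 4 : ℝ)) (Or.inl hpos.ne')).congr_deriv ?_
  rw [amplitudeDeriv, show -(1 / 4 : ℝ) - 1 = -(5 / 4) by norm_num]; ring

theorem hasDerivAt_amplitudeDeriv (hp : HasDerivAt p (p' x) x) (hp' : HasDerivAt p' (p'' x) x)
    (hpos : 0 < p x) : HasDerivAt (amplitudeDeriv p p') (amplitudeDeriv2 p p' p'' x) x := by
  refine ((hp'.const_mul (-(1 / 4) : ℝ)).mul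
    (hp.rpow_const (p := -(5 / 4 : ℝ)) (Or.inl hpos.ne'))).congr_deriv ?_
  rw [amplitudeDeriv2, show -(5 / 4 : ℝ) - 1 = -(9 / 4) by norm_num]; ring

/-- The transport equation `(√p a)' = -√p a'` for the amplitude `a = p^{-1/4}`. -/
theorem hasDerivAt_rpow_quarter (hp : HasDerivAt p (p' x) x) (hpos : 0 < p x) :
    HasDerivAt (fun y => p y ^ (1 / 4 : ℝ)) (-(√(p x) * amplitudeDeriv p p' x)) x := by
  refine (hp.rpow_const (p := (1 / 4 : ℝ)) (Or.inl hpos.ne')).congr_deriv ?_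
  rw [amplitudeDeriv, show (1 / 4 : ℝ) - 1 = -(5 / 4) + 1 / 2 by norm_num,
    ← Real.sqrt_mul_rpow hpos]
  ring

theorem hasDerivAt_ansatz (hp : HasDerivAt p (p' x) x) (hpos : 0 < p x)
    (hΦ : HasDerivAt Φ √(p x) x) :
    HasDerivAt (ansatz p Φ c h) (ansatzDeriv p p' Φ c h x) x := by
  refine ((hasDerivAt_amplitude hp hpos).ofReal_comp.mul_cexp_mul_div c h hΦ).congr_deriv ?_
  have hq : √(p x) * p x ^ (-(1 / 4) : ℝ) = p x ^ (1 / 4 : ℝ) := by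
    rw [Real.sqrt_mul_rpow hpos]; norm_num
  rw [ansatzDeriv, ← hq]; push_cast; ring

theorem hasDerivAt_ansatzDeriv (hc : c ^ 2 = -1) (hp : HasDerivAt p (p' x) x)
    (hp' : HasDerivAt p' (p'' x) x) (hpos : 0 < p x) (hΦ : HasDerivAt Φ √(p x) x) :
    HasDerivAt (ansatzDeriv p p' Φ c h)
      (amplitudeDeriv2 p p' p'' x * cexp (c * Φ x / h) - p x / h ^ 2 * ansatz p Φ c h x) x := by
  have hA := (hasDerivAt_amplitudeDeriv hp hp' hpos).ofReal_comp.add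
    ((hasDerivAt_rpow_quarter hp hpos).ofReal_comp.const_mul (c / h))
  refine (hA.mul_cexp_mul_div c h hΦ).congr_deriv ?_
  have hq : √(p x) * p x ^ (1 / 4 : ℝ) = p x * p x ^ (-(1 / 4) : ℝ) := by
    rw [Real.sqrt_mul_rpow hpos, ← Real.rpow_one_add' hpos.le (by norm_num)]; norm_num
  have hq' : ((√(p x) : ℝ) : ℂ) * ((p x ^ (1 / 4 : ℝ) : ℝ) : ℂ)
      = (p x : ℂ) * ((p x ^ (-(1 / 4) : ℝ) : ℝ) : ℂ) := by exact_mod_cast hq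
  rw [ansatz]; push_cast
  simp only [Pi.add_apply]
  linear_combination
    (((√(p x) : ℝ) : ℂ) * ((p x ^ (1 / 4 : ℝ) : ℝ) : ℂ) * cexp (c * Φ x / h) / h ^ 2) * hc
      - (cexp (c * Φ x / h) / h ^ 2) * hq'

theorem hasDerivAt_deriv_ansatz (hc : c ^ 2 = -1) (hp : ∀ y, HasDerivAt p (p' y) y)
    (hp' : HasDerivAt p' (p'' x) x) (hΦ : ∀ y, HasDerivAt Φ √(p y) y)
    (hpos : ∀ᶠ y in 𝓝 x, 0 < p y) :
    HasDerivAt (deriv (ansatz p Φ c h))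
      (amplitudeDeriv2 p p' p'' x * cexp (c * Φ x / h) - p x / h ^ 2 * ansatz p Φ c h x) x :=
  (hasDerivAt_ansatzDeriv hc (hp x) hp' hpos.self_of_nhds (hΦ x)).congr_of_eventuallyEq
    (hpos.mono fun y hy => (hasDerivAt_ansatz (hp y) hy (hΦ y)).deriv)

theorem norm_ansatz (hc : c.re = 0) (hpos : 0 < p x) :
    ‖ansatz p Φ c h x‖ = p x ^ (-(1 / 4) : ℝ) := by
  rw [ansatz, norm_mul, norm_cexp_mul_div hc, Complex.norm_real,
    Real.norm_of_nonneg (Real.rpow_nonneg hpos.le _), mul_one]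

end Ansatz

section Wronskian

variable {p p' p'' Φ : ℝ → ℝ} {c : ℂ} {h x : ℝ} {v v' : ℝ → ℂ} {v'' : ℂ}

def wronskian (h : ℝ) (f f' g : ℝ → ℂ) (y : ℝ) : ℂ :=
  f y * ((h : ℂ) * deriv g y) - g y * ((h : ℂ) * f' y)

theorem wronskian_ansatz_neg_I_ansatz_I (hp : HasDerivAt p (p' x) x) (hpos : 0 < p x)
    (hΦ : HasDerivAt Φ √(p x) x) (hh : h ≠ 0) :
    wronskian h (ansatz p Φ (-Complex.I) h) (ansatzDeriv p p' Φ (-Complex.I) h)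
      (ansatz p Φ Complex.I h) x = 2 * Complex.I := by
  have he : cexp (Complex.I * Φ x / h) * cexp (-Complex.I * Φ x / h) = 1 := by
    rw [← Complex.exp_add]; ring_nf; exact Complex.exp_zero
  have hq : ((p x ^ (-(1 / 4) : ℝ) : ℝ) : ℂ) * ((p x ^ (1 / 4 : ℝ) : ℝ) : ℂ) = 1 := by
    rw [← Complex.ofReal_mul, ← Real.rpow_add hpos]; norm_num
  have hh' : (h : ℂ) ≠ 0 := by exact_mod_cast hh
  rw [wronskian, (hasDerivAt_ansatz hp hpos hΦ).deriv, ansatz, ansatz, ansatzDeriv, ansatzDeriv]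
  set eP := cexp (Complex.I * Φ x / h)
  set eM := cexp (-Complex.I * Φ x / h)
  field_simp
  linear_combination (2 * Complex.I * eP * eM) * hq + 2 * Complex.I * he

theorem two_I_mul_eq_wronskian (hp : HasDerivAt p (p' x) x) (hΦ : HasDerivAt Φ √(p x) x)
    (hpos : 0 < p x) (hh : h ≠ 0) :
    2 * Complex.I * v x
      = wronskian h v v' (ansatz p Φ Complex.I h) x * ansatz p Φ (-Complex.I) h x
        - wronskian h v v' (ansatz p Φ (-Complex.I) h) x * ansatz p Φ Complex.I h x := by
  have hW := wronskian_ansatz_neg_I_ansatz_I hp hpos hΦ hh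
  rw [wronskian, (hasDerivAt_ansatz hp hpos hΦ).deriv] at hW
  rw [wronskian, wronskian, (hasDerivAt_ansatz hp hpos hΦ).deriv,
    (hasDerivAt_ansatz hp hpos hΦ).deriv]
  linear_combination (-v x) * hW

theorem hasDerivAt_wronskian_ansatz (hc : c ^ 2 = -1) (hh : h ≠ 0)
    (hp : ∀ y, HasDerivAt p (p' y) y) (hp' : HasDerivAt p' (p'' x) x)
    (hΦ : ∀ y, HasDerivAt Φ √(p y) y) (hpos : ∀ᶠ y in 𝓝 x, 0 < p y)
    (hv : HasDerivAt v (v' x) x) (hv' : HasDerivAt v' v'' x)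
    (hode : (h : ℂ) ^ 2 * v'' = -p x * v x) :
    HasDerivAt (wronskian h v v' (ansatz p Φ c h))
      (h * v x * amplitudeDeriv2 p p' p'' x * cexp (c * Φ x / h)) x := by
  have hu := hasDerivAt_ansatz (c := c) (h := h) (hp x) hpos.self_of_nhds (hΦ x)
  rw [← hu.deriv] at hu
  refine ((hv.mul ((hasDerivAt_deriv_ansatz hc hp hp' hΦ hpos).const_mul (h : ℂ))).sub
    (hu.mul (hv'.const_mul (h : ℂ)))).congr_deriv ?_
  have hh' : (h : ℂ) ≠ 0 := by exact_mod_cast hh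
  field_simp
  linear_combination (-ansatz p Φ c h x) * hode

end Wronskian

section WronskianVector

variable {p p' p'' Φ : ℝ → ℝ} {h x : ℝ} {v v' : ℝ → ℂ}

/-- The paper's `𝐯`; in `WithLp 2` its norm is `√(‖W(v, v₊)‖² + ‖W(v, v₋)‖²)`. -/
def wronskianVector (p Φ : ℝ → ℝ) (h : ℝ) (v v' : ℝ → ℂ) (y : ℝ) : WithLp 2 (ℂ × ℂ) :=
  WithLp.toLp 2 (wronskian h v v' (ansatz p Φ Complex.I h) y,
    wronskian h v v' (ansatz p Φ (-Complex.I) h) y)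

def wronskianVectorDeriv (p p' p'' Φ : ℝ → ℝ) (h : ℝ) (v : ℝ → ℂ) (y : ℝ) :
    WithLp 2 (ℂ × ℂ) :=
  WithLp.toLp 2 (h * v y * amplitudeDeriv2 p p' p'' y * cexp (Complex.I * Φ y / h),
    h * v y * amplitudeDeriv2 p p' p'' y * cexp (-Complex.I * Φ y / h))

theorem hasDerivAt_wronskianVector {v'' : ℂ} (hh : h ≠ 0)
    (hp : ∀ y, HasDerivAt p (p' y) y) (hp' : HasDerivAt p' (p'' x) x)
    (hΦ : ∀ y, HasDerivAt Φ √(p y) y) (hpos : ∀ᶠ y in 𝓝 x, 0 < p y)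
    (hv : HasDerivAt v (v' x) x) (hv' : HasDerivAt v' v'' x)
    (hode : (h : ℂ) ^ 2 * v'' = -p x * v x) :
    HasDerivAt (wronskianVector p Φ h v v') (wronskianVectorDeriv p p' p'' Φ h v x) x :=
  (WithLp.prodContinuousLinearEquiv 2 ℝ ℂ ℂ).symm.hasFDerivAt.comp_hasDerivAt x
    ((hasDerivAt_wronskian_ansatz Complex.I_sq hh hp hp' hΦ hpos hv hv' hode).prodMk
      (hasDerivAt_wronskian_ansatz (by rw [neg_sq, Complex.I_sq]) hh hp hp' hΦ hpos hv hv' hode))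

theorem sqrt_two_mul_norm_le_wronskianVector (hp : HasDerivAt p (p' x) x)
    (hΦ : HasDerivAt Φ √(p x) x) (hpos : 0 < p x) (hh : h ≠ 0) :
    √2 * ‖v x‖ ≤ p x ^ (-(1 / 4) : ℝ) * ‖wronskianVector p Φ h v v' x‖ := by
  set a := p x ^ (-(1 / 4) : ℝ)
  set wP := wronskian h v v' (ansatz p Φ Complex.I h) x
  set wM := wronskian h v v' (ansatz p Φ (-Complex.I) h) x
  have hv : 2 * ‖v x‖ ≤ a * (‖wP‖ + ‖wM‖) := calc
    2 * ‖v x‖ = ‖2 * Complex.I * v x‖ := by simp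
    _ = ‖wP * ansatz p Φ (-Complex.I) h x - wM * ansatz p Φ Complex.I h x‖ := by
      rw [two_I_mul_eq_wronskian hp hΦ hpos hh]
    _ ≤ ‖wP‖ * a + ‖wM‖ * a := by
      refine (norm_sub_le _ _).trans_eq ?_
      rw [norm_mul, norm_mul, norm_ansatz (by simp) hpos, norm_ansatz (by simp) hpos]
    _ = a * (‖wP‖ + ‖wM‖) := by ring
  have hW : ‖wronskianVector p Φ h v v' x‖ ^ 2 = ‖wP‖ ^ 2 + ‖wM‖ ^ 2 :=
    WithLp.prod_norm_sq_eq_of_L2 _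
  have ha : 0 ≤ a := Real.rpow_nonneg hpos.le _
  refine (pow_le_pow_iff_left₀ (by positivity) (by positivity) two_ne_zero).1 ?_
  have h4 := pow_le_pow_left₀ (by positivity) hv 2
  rw [mul_pow, mul_pow, hW, Real.sq_sqrt zero_le_two]
  nlinarith [mul_nonneg (sq_nonneg a) (sq_nonneg (‖wP‖ - ‖wM‖))]

theorem norm_wronskianVectorDeriv_le (hp : HasDerivAt p (p' x) x)
    (hΦ : HasDerivAt Φ √(p x) x) (hpos : 0 < p x) (hh : 0 < h) :
    ‖wronskianVectorDeriv p p' p'' Φ h v x‖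
      ≤ |amplitudeDeriv2 p p' p'' x| * p x ^ (-(1 / 4) : ℝ) * h
        * ‖wronskianVector p Φ h v v' x‖ := calc
  _ = |amplitudeDeriv2 p p' p'' x| * h * (√2 * ‖v x‖) := by
    rw [wronskianVectorDeriv, WithLp.prod_norm_eq_of_L2]
    simp only [WithLp.toLp_fst, WithLp.toLp_snd, norm_mul, Complex.norm_real, Real.norm_eq_abs,
      norm_cexp_mul_div (c := Complex.I) (by simp), norm_cexp_mul_div (c := -Complex.I) (by simp),
      abs_of_pos hh]
    rw [← two_mul, Real.sqrt_mul zero_le_two, Real.sqrt_sq (by positivity)]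
    ring
  _ ≤ |amplitudeDeriv2 p p' p'' x| * h
        * (p x ^ (-(1 / 4) : ℝ) * ‖wronskianVector p Φ h v v' x‖) := by
    exact mul_le_mul_of_nonneg_left
      (sqrt_two_mul_norm_le_wronskianVector hp hΦ hpos hh.ne') (by positivity)
  _ = _ := by ring

theorem norm_wronskianVector_sub_le {v'' : ℝ → ℂ} {a b K : ℝ} (hh : 0 < h) (hK : 0 < K)
    (hp : ∀ y, HasDerivAt p (p' y) y) (hp' : ∀ y, HasDerivAt p' (p'' y) y)
    (hΦ : ∀ y, HasDerivAt Φ √(p y) y) (hpos : ∀ t ∈ Icc a b, 0 < p t)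
    (hbound : ∀ t ∈ Icc a b, |amplitudeDeriv2 p p' p'' t| * p t ^ (-(1 / 4) : ℝ) ≤ K)
    (hv : ∀ t ∈ Icc a b, HasDerivAt v (v' t) t) (hv' : ∀ t ∈ Icc a b, HasDerivAt v' (v'' t) t)
    (hode : ∀ t ∈ Icc a b, (h : ℂ) ^ 2 * v'' t = -p t * v t) :
    ∀ x ∈ Icc a b, ‖wronskianVector p Φ h v v' x - wronskianVector p Φ h v v' a‖
      ≤ K * h * (x - a) * Real.exp (K * h * (x - a)) * ‖wronskianVector p Φ h v v' a‖ :=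
  norm_sub_le_of_norm_deriv_le_mul (by positivity)
    (fun t ht => hasDerivAt_wronskianVector hh.ne' hp (hp' t) hΦ
      (continuousAt_const.eventually_lt (hp t).continuousAt (hpos t ht)) (hv t ht) (hv' t ht)
      (hode t ht))
    (fun t ht => (norm_wronskianVectorDeriv_le (hp t) (hΦ t) (hpos t ht) hh).trans (by
      gcongr; exact hbound t ht))

end WronskianVector

theorem abs_amplitudeDeriv2_mul_le {p p' p'' : ℝ → ℝ} {y δ C : ℝ} (hδ : 0 < δ) (hp : δ ≤ p y)
    (h₁ : |p' y| ≤ C) (h₂ : |p'' y| ≤ C) :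
    |amplitudeDeriv2 p p' p'' y| * p y ^ (-(1 / 4) : ℝ)
      ≤ 1 / 4 * C * δ ^ (-(3 / 2) : ℝ) + 5 / 16 * C ^ 2 * δ ^ (-(5 / 2) : ℝ) := by
  have hpos : 0 < p y := hδ.trans_le hp
  have e : amplitudeDeriv2 p p' p'' y * p y ^ (-(1 / 4) : ℝ)
      = -(1 / 4) * p'' y * p y ^ (-(3 / 2) : ℝ) + 5 / 16 * p' y ^ 2 * p y ^ (-(5 / 2) : ℝ) := by
    rw [amplitudeDeriv2, add_mul, mul_assoc, mul_assoc (5 / 16 * _), ← Real.rpow_add hpos,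
      ← Real.rpow_add hpos]
    norm_num
  have h32 := Real.rpow_le_rpow_of_nonpos hδ hp (by norm_num : -(3 / 2 : ℝ) ≤ 0)
  have h52 := Real.rpow_le_rpow_of_nonpos hδ hp (by norm_num : -(5 / 2 : ℝ) ≤ 0)
  have hC : 0 ≤ C := (abs_nonneg _).trans h₁
  rw [← abs_of_nonneg (Real.rpow_nonneg hpos.le (-(1 / 4))), ← abs_mul, e]
  calc _ ≤ |-(1 / 4) * p'' y * p y ^ (-(3 / 2) : ℝ)|
        + |5 / 16 * p' y ^ 2 * p y ^ (-(5 / 2) : ℝ)| := abs_add_le _ _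
    _ = 1 / 4 * |p'' y| * p y ^ (-(3 / 2) : ℝ) + 5 / 16 * |p' y| ^ 2 * p y ^ (-(5 / 2) : ℝ) := by
      simp only [abs_mul, abs_neg, abs_pow, abs_of_nonneg (Real.rpow_nonneg hpos.le _)]
      norm_num
    _ ≤ _ := by gcongr

theorem exists_bound_amplitudeDeriv2 {V : ℝ → ℝ} (hV : ContDiff ℝ 2 V) {s : Set ℝ}
    (hs : IsCompact s) {δ : ℝ} (hδ : 0 < δ) :
    ∃ K > 0, ∀ E₀, ∀ y ∈ s, δ ≤ E₀ - V y →
      |amplitudeDeriv2 (fun y => E₀ - V y) (fun y => -deriv V y) (fun y => -deriv (deriv V) y) y|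
        * (E₀ - V y) ^ (-(1 / 4) : ℝ) ≤ K := by
  have hV' : ContDiff ℝ 1 (deriv V) := (contDiff_succ_iff_deriv.1 hV).2.2
  obtain ⟨C₁, hC₁⟩ :=
    hs.exists_bound_of_continuousOn (hV.continuous_deriv one_le_two).continuousOn
  obtain ⟨C₂, hC₂⟩ := hs.exists_bound_of_continuousOn (hV'.continuous_deriv le_rfl).continuousOn
  set C := max (max C₁ C₂) 1
  refine ⟨1 / 4 * C * δ ^ (-(3 / 2) : ℝ) + 5 / 16 * C ^ 2 * δ ^ (-(5 / 2) : ℝ), by positivity,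
    fun E₀ y hy hδy => abs_amplitudeDeriv2_mul_le hδ hδy ?_ ?_⟩
  · rw [abs_neg, ← Real.norm_eq_abs]
    exact (hC₁ y hy).trans ((le_max_left _ _).trans (le_max_left _ _))
  · rw [abs_neg, ← Real.norm_eq_abs]
    exact (hC₂ y hy).trans ((le_max_right _ _).trans (le_max_left _ _))

end WKB

theorem hasDerivAt_wkbPhase {V : ℝ → ℝ} (hV : Continuous V) (E₀ x : ℝ) :
    HasDerivAt (wkbPhase V E₀) √(E₀ - V x) x :=
  ((continuous_const.sub hV).sqrt.integral_hasStrictDerivAt (4 - E₀) x).hasDerivAt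

theorem WKB.wronskianVector_eq_wrPlus_wrMinus (V : ℝ → ℝ) (h E₀ : ℝ) (v v' : ℝ → ℂ) (x : ℝ) :
    WKB.wronskianVector (fun y => E₀ - V y) (wkbPhase V E₀) h v v' x
      = WithLp.toLp 2 (wrPlus V h E₀ v v' x, wrMinus V h E₀ v v' x) :=
  rfl

open WKB in
theorem wronskian_vector_almost_constant_general
    (V : ℝ → ℝ)
    (hV_smooth : ContDiff ℝ (⊤ : ℕ∞) V)
    (hV_lt : ∀ x : ℝ, 3 < x → V x < 1)
    (R : ℝ) (hR : 5 < R) :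
    ∃ C > (0 : ℝ), ∃ h₀ > (0 : ℝ), ∀ h : ℝ, 0 < h → h < h₀ →
      ∀ E₀ : ℝ, |E₀ - (1 + h)| ≤ Real.exp (-1 / (10 * h)) →
      ∀ v v' v'' : ℝ → ℂ,
        (∀ x ∈ Set.Icc (3.5 : ℝ) (R + 1), HasDerivAt v (v' x) x) →
        (∀ x ∈ Set.Icc (3.5 : ℝ) (R + 1), HasDerivAt v' (v'' x) x) →
        (∀ x ∈ Set.Icc (3.5 : ℝ) (R + 1),
          -(h : ℂ) ^ 2 * v'' x + ((V x - E₀ : ℝ) : ℂ) * v x = 0) →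
        ∀ x ∈ Set.Icc (3.5 : ℝ) (R + 1),
          Real.sqrt (‖wrPlus V h E₀ v v' x - wrPlus V h E₀ v v' 3.5‖ ^ 2
              + ‖wrMinus V h E₀ v v' x - wrMinus V h E₀ v v' 3.5‖ ^ 2)
            ≤ C * h * Real.sqrt (‖wrPlus V h E₀ v v' 3.5‖ ^ 2
              + ‖wrMinus V h E₀ v v' 3.5‖ ^ 2) := by
  have hV : ContDiff ℝ 2 V := hV_smooth.of_le (WithTop.coe_le_coe.2 le_top)
  have hV' : ContDiff ℝ 1 (deriv V) := (contDiff_succ_iff_deriv.1 hV).2.2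
  obtain ⟨δ, hδ, hVδ⟩ := (isCompact_Icc (a := (3.5 : ℝ)) (b := R + 1)).exists_forall_le'
    (f := fun x => 1 - V x) (continuous_const.sub hV.continuous).continuousOn (a := 0)
    fun x hx => sub_pos.2 (hV_lt x (by linarith [hx.1]))
  obtain ⟨K, hK, hKδ⟩ := exists_bound_amplitudeDeriv2 hV isCompact_Icc (half_pos hδ)
  have hR' : 0 < R + 1 - 3.5 := by linarith
  refine ⟨K * (R + 1 - 3.5) * Real.exp (K * (R + 1 - 3.5)), by positivity, min 1 (δ / 18),
    by positivity, ?_⟩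
  intro h hh hh₀ E₀ hE v v' v'' hv hv' hode x hx
  have hgap : ∀ t ∈ Icc (3.5 : ℝ) (R + 1), δ / 2 ≤ E₀ - V t := fun t ht => by
    linarith [(abs_le.1 hE).1, Real.exp_neg_one_div_le (by positivity : 0 < 10 * h), hVδ t ht,
      min_le_right 1 (δ / 18)]
  have key := norm_wronskianVector_sub_le (p := fun y => E₀ - V y) hh hK
    (fun y => (hV.differentiable two_ne_zero y).hasDerivAt.const_sub E₀)
    (fun y => (hV'.differentiable one_ne_zero y).hasDerivAt.neg)
    (hasDerivAt_wkbPhase hV.continuous E₀) (fun t ht => (half_pos hδ).trans_le (hgap t ht))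
    (fun t ht => hKδ E₀ t ht (hgap t ht)) hv hv'
    (fun t ht => by have := hode t ht; push_cast at this ⊢; linear_combination -this) x hx
  simp only [wronskianVector_eq_wrPlus_wrMinus, ← WithLp.toLp_sub, Prod.mk_sub_mk,
    WithLp.prod_norm_eq_of_L2, WithLp.toLp_fst, WithLp.toLp_snd] at key
  refine key.trans ?_
  have hh₁ : h ≤ 1 := hh₀.le.trans (min_le_left _ _)
  calc _ ≤ K * h * (R + 1 - 3.5) * Real.exp (K * 1 * (R + 1 - 3.5)) * _ := by
        gcongr <;> linarith [hx.1, hx.2]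
    _ = _ := by rw [mul_one]; ring

/-- For any solution `v` of `(P - E₀) v = 0` on `[3.5, R+1]`, the vector of
Wronskians `𝐯(x) = (W(v,v₊)(x), W(v,v₋)(x))` satisfies `𝐯(x) = 𝐯(3.5)(1 + O(h))`. -/
theorem wronskian_vector_almost_constant
    (V : ℝ → ℝ)
    (hV_smooth : ContDiff ℝ (⊤ : ℕ∞) V) (hV_comp : HasCompactSupport V)
    (hV_nonneg : ∀ x, 0 ≤ V x) (hV_even : ∀ x, V (-x) = V x)
    (hV_inner : ∀ x ∈ Set.Icc (-1 : ℝ) 1, V x = x ^ 2 + 1)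
    (hV_slope : ∀ x ∈ Set.Icc (2 : ℝ) 3.5, V x = 4 - x)
    (hV_lt : ∀ x : ℝ, 3 < x → V x < 1)
    (hV_supp : tsupport V ⊆ Set.Icc (-5 : ℝ) 5)
    (R : ℝ) (hR : 5 < R) :
    ∃ C > (0 : ℝ), ∃ h₀ > (0 : ℝ), ∀ h : ℝ, 0 < h → h < h₀ →
      ∀ E₀ : ℝ, |E₀ - (1 + h)| ≤ Real.exp (-1 / (10 * h)) →
      ∀ v v' v'' : ℝ → ℂ,
        (∀ x ∈ Set.Icc (3.5 : ℝ) (R + 1), HasDerivAt v (v' x) x) →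
        (∀ x ∈ Set.Icc (3.5 : ℝ) (R + 1), HasDerivAt v' (v'' x) x) →
        (∀ x ∈ Set.Icc (3.5 : ℝ) (R + 1),
          -(h : ℂ) ^ 2 * v'' x + ((V x - E₀ : ℝ) : ℂ) * v x = 0) →
        ∀ x ∈ Set.Icc (3.5 : ℝ) (R + 1),
          Real.sqrt (‖wrPlus V h E₀ v v' x - wrPlus V h E₀ v v' 3.5‖ ^ 2
              + ‖wrMinus V h E₀ v v' x - wrMinus V h E₀ v v' 3.5‖ ^ 2)
            ≤ C * h * Real.sqrt (‖wrPlus V h E₀ v v' 3.5‖ ^ 2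
              + ‖wrMinus V h E₀ v v' 3.5‖ ^ 2) :=
  wronskian_vector_almost_constant_general V hV_smooth hV_lt R hR
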